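/- Let μ^N be a probability measure on ℝ^d×ℝ^d with spatial marginal ρ^N, let ρ be a probability density on ℝ^d, and let u ∈ (L^∞ ∩ Lip)(ℝ^d;ℝ^d). Then the bounded Lipschitz distance between the second velocity moment of μ^N and ρ u⊗u satisfies: d_BL( ∫_{ℝ^d} (v⊗v) μ^N(·,dv), ρ u⊗u ) ≤ ∫_{ℝ^d×ℝ^d} |v − u(x)|² μ^N(dx,dv) + C ( ∫_{ℝ^d×ℝ^d} |v − u(x)|² μ^N(dx,dv) )^{1/2} + C d_BL(ρ^N, ρ), where C > 0 depends only on ‖u‖_{L^∞} and ‖u‖_{Lip}. -/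

import Mathlib

/-!
Fix a component `(i, j)` and a test function `φ` with `|φ| ≤ 1`, `Lip φ ≤ 1`, and write
`v_i v_j = u_i u_j + (v_i v_j - u_i u_j)` with `u = u(x)`. The remainder is bounded pointwise by
`|v - u|² + 2 ‖u‖_∞ |v - u|`, whose `μ^N`-integral is at most `E + 2 ‖u‖_∞ √E` by Cauchy–Schwarz,
where `E = ∫ |v - u(x)|² dμ^N`. The main part depends on `x` only, so it integrates against the
marginal `ρ^N`; since `φ u_i u_j` is bounded by `‖u‖_∞²` and Lipschitz with constant
`‖u‖_∞² + 2 ‖u‖_∞ Lip u`, rescaling it to a bounded-Lipschitz test function compares its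
integrals against `ρ^N` and `ρ` by `d_BL(ρ^N, ρ)`.
-/

open MeasureTheory Set Finset
open scoped ENNReal

noncomputable section

/-- The bounded Lipschitz distance between two measures. -/
def dBL {α : Type*} [MeasurableSpace α] [PseudoEMetricSpace α]
    (μ ν : Measure α) : ℝ :=
  sSup { r : ℝ | ∃ φ : α → ℝ, (∀ z, |φ z| ≤ 1) ∧ LipschitzWith 1 φ ∧
    r = |(∫ z, φ z ∂μ) - ∫ z, φ z ∂ν| }

/-- The bounded Lipschitz distance between the (matrix-valued) second velocity moment
`∫ (v⊗v) μ^N(·,dv)` of a phase-space measure `μ^N` and `ρ u⊗u`, applied componentwise: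
the supremum over matrix components `(i,j)` and over bounded Lipschitz test functions
`φ` of `|∫ φ(x) v_i v_j μ^N(dx,dv) − ∫ φ(x) ρ(x) u_i(x) u_j(x) dx|`. -/
def dBLmom2 {d : ℕ} (μ : Measure (EuclideanSpace ℝ (Fin d) × EuclideanSpace ℝ (Fin d)))
    (ρ : EuclideanSpace ℝ (Fin d) → ℝ) (u : EuclideanSpace ℝ (Fin d) → EuclideanSpace ℝ (Fin d)) :
    ℝ :=
  sSup { r : ℝ | ∃ i j : Fin d, ∃ φ : EuclideanSpace ℝ (Fin d) → ℝ,
    (∀ z, |φ z| ≤ 1) ∧ LipschitzWith 1 φ ∧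
    r = |(∫ z, φ z.1 * (z.2 i * z.2 j) ∂μ) - ∫ y, φ y * (ρ y * (u y i * u y j))| }


open scoped NNReal

section BoundedLipschitz

variable {α : Type*} [MeasurableSpace α] [PseudoEMetricSpace α]

lemma dBL_nonneg (μ ν : Measure α) : 0 ≤ dBL μ ν :=
  Real.sSup_nonneg (by rintro r ⟨φ, -, -, rfl⟩; exact abs_nonneg _)

lemma abs_integral_sub_le_dBL (μ ν : Measure α) [IsFiniteMeasure μ] [IsFiniteMeasure ν]
    {φ : α → ℝ} (hφb : ∀ z, |φ z| ≤ 1) (hφl : LipschitzWith 1 φ) :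
    |(∫ z, φ z ∂μ) - ∫ z, φ z ∂ν| ≤ dBL μ ν := by
  refine le_csSup ⟨μ.real univ + ν.real univ, ?_⟩ ⟨φ, hφb, hφl, rfl⟩
  rintro r ⟨ψ, hψb, -, rfl⟩
  have bound (m : Measure α) [IsFiniteMeasure m] : |∫ z, ψ z ∂m| ≤ m.real univ := by
    simpa using norm_integral_le_of_norm_le_const (μ := m) (f := ψ) (C := 1)
      (ae_of_all _ fun z => by simpa using hψb z)
  exact (abs_sub _ _).trans (add_le_add (bound μ) (bound ν))

lemma abs_integral_sub_le_mul_dBL (μ ν : Measure α) [IsFiniteMeasure μ] [IsFiniteMeasure ν]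
    {ψ : α → ℝ} {K : ℝ≥0} (hψb : ∀ z, |ψ z| ≤ K) (hψl : LipschitzWith K ψ) :
    |(∫ z, ψ z ∂μ) - ∫ z, ψ z ∂ν| ≤ K * dBL μ ν := by
  rcases eq_or_ne K 0 with rfl | hK
  · have hψ : ψ = 0 := funext fun z => abs_nonpos_iff.mp (by simpa using hψb z)
    simp [hψ]
  have hK' : (0 : ℝ) < K := by positivity
  have hscaled := abs_integral_sub_le_dBL μ ν (φ := fun z => (K : ℝ)⁻¹ * ψ z)
    (fun z => by
      rw [abs_mul, abs_of_pos (inv_pos.2 hK')]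
      exact inv_mul_le_one_of_le₀ (hψb z) hK'.le)
    (by simpa [Function.comp_def, hK] using (lipschitzWith_smul (K : ℝ)⁻¹).comp hψl)
  rwa [integral_const_mul, integral_const_mul, ← mul_sub, abs_mul,
    abs_of_pos (inv_pos.2 hK'), inv_mul_le_iff₀ hK'] at hscaled

end BoundedLipschitz

lemma LipschitzWith.mul_of_abs_le {α : Type*} [PseudoMetricSpace α] {f g : α → ℝ}
    {Kf Kg Bf Bg : ℝ≥0} (hf : LipschitzWith Kf f) (hg : LipschitzWith Kg g)
    (hfb : ∀ x, |f x| ≤ Bf) (hgb : ∀ x, |g x| ≤ Bg) :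
    LipschitzWith (Bf * Kg + Bg * Kf) fun x => f x * g x := by
  refine LipschitzWith.of_dist_le_mul fun x y => ?_
  have hfxy := hf.dist_le_mul x y
  have hgxy := hg.dist_le_mul x y
  rw [Real.dist_eq] at hfxy hgxy ⊢
  calc |f x * g x - f y * g y| = |f x * (g x - g y) + g y * (f x - f y)| := by ring_nf
    _ ≤ |f x| * |g x - g y| + |g y| * |f x - f y| := by
      rw [← abs_mul, ← abs_mul]; exact abs_add_le _ _
    _ ≤ Bf * (Kg * dist x y) + Bg * (Kf * dist x y) := by
      gcongr
      exacts [hfb x, hgb y]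
    _ = ↑(Bf * Kg + Bg * Kf) * dist x y := by push_cast; ring

lemma EuclideanSpace.lipschitzWith_apply {ι : Type*} [Fintype ι] (i : ι) :
    LipschitzWith 1 fun v : EuclideanSpace ℝ ι => v i :=
  LipschitzWith.of_dist_le_mul fun v w => by simpa using PiLp.dist_apply_le v w i

lemma integral_le_sqrt_integral_sq {Ω : Type*} [MeasurableSpace Ω] {μ : Measure Ω}
    [IsProbabilityMeasure μ] {f : Ω → ℝ} (hf : MemLp f 2 μ) :
    ∫ ω, f ω ∂μ ≤ √(∫ ω, f ω ^ 2 ∂μ) := by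
  have hvar := ProbabilityTheory.variance_nonneg f μ
  rw [ProbabilityTheory.variance_eq_sub hf, sub_nonneg] at hvar
  exact Real.le_sqrt_of_sq_le hvar

lemma abs_apply_mul_apply_sub_le {ι : Type*} [Fintype ι] (v w : EuclideanSpace ℝ ι) (i j : ι) :
    |v i * v j - w i * w j| ≤ ‖v - w‖ ^ 2 + 2 * ‖w‖ * ‖v - w‖ := by
  have hv : v = (v - w) + w := by abel
  set a := v - w
  rw [hv]
  have hai := PiLp.norm_apply_le a i
  have haj := PiLp.norm_apply_le a j
  have hwi := PiLp.norm_apply_le w i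
  have hwj := PiLp.norm_apply_le w j
  simp only [Real.norm_eq_abs] at hai haj hwi hwj
  calc |(a + w) i * (a + w) j - w i * w j| = |a i * a j + (a i * w j + w i * a j)| := by
        simp only [PiLp.add_apply]; ring_nf
    _ ≤ |a i| * |a j| + (|a i| * |w j| + |w i| * |a j|) := by
      refine (abs_add_le _ _).trans (add_le_add (abs_mul _ _).le ?_)
      rw [← abs_mul, ← abs_mul]; exact abs_add_le _ _
    _ ≤ ‖a‖ * ‖a‖ + (‖a‖ * ‖w‖ + ‖w‖ * ‖a‖) := by gcongr
    _ = ‖a‖ ^ 2 + 2 * ‖w‖ * ‖a‖ := by ring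

lemma abs_mul_apply_mul_apply_le {α ι : Type*} [Fintype ι] {φ : α → ℝ} (hφb : ∀ x, |φ x| ≤ 1)
    {u : α → EuclideanSpace ℝ ι} {B : ℝ} (huB : ∀ x, ‖u x‖ ≤ B) (x : α) (i j : ι) :
    |φ x * (u x i * u x j)| ≤ B * B := by
  have hcoordB (k : ι) : |u x k| ≤ B := (PiLp.norm_apply_le (u x) k).trans (huB x)
  rw [abs_mul, abs_mul, ← one_mul (B * B)]
  exact mul_le_mul (hφb x) (mul_le_mul (hcoordB i) (hcoordB j) (abs_nonneg _)
    ((norm_nonneg _).trans (huB x))) (by positivity) zero_le_one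

lemma abs_integral_apply_mul_apply_sub_le {X ι : Type*} [MeasurableSpace X] [Fintype ι]
    {μ : Measure (X × EuclideanSpace ℝ ι)} [IsProbabilityMeasure μ]
    (hv : Integrable (fun z => ‖z.2‖ ^ 2) μ) {u : X → EuclideanSpace ℝ ι} (hu : Measurable u)
    {B : ℝ} (huB : ∀ x, ‖u x‖ ≤ B) {φ : X → ℝ} (hφ : Measurable φ) (hφb : ∀ x, |φ x| ≤ 1)
    (i j : ι) :
    |(∫ z, φ z.1 * (z.2 i * z.2 j) ∂μ) - ∫ z, φ z.1 * (u z.1 i * u z.1 j) ∂μ|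
      ≤ (∫ z, ‖z.2 - u z.1‖ ^ 2 ∂μ) + 2 * B * √(∫ z, ‖z.2 - u z.1‖ ^ 2 ∂μ) := by
  have hB : 0 ≤ B :=
    (nonempty_of_isProbabilityMeasure μ).elim fun z => (norm_nonneg _).trans (huB z.1)
  have hcoord (k : ι) : Measurable fun v : EuclideanSpace ℝ ι => v k :=
    (EuclideanSpace.lipschitzWith_apply k).continuous.measurable
  have hw : MemLp (fun z => z.2 - u z.1) 2 μ :=
    ((memLp_two_iff_integrable_sq_norm measurable_snd.aestronglyMeasurable).2 hv).sub
      (.of_bound (hu.comp measurable_fst).aestronglyMeasurable B (ae_of_all _ fun z => huB z.1))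
  have hvv : Integrable (fun z => φ z.1 * (z.2 i * z.2 j)) μ := by
    refine hv.mono' (by fun_prop) (ae_of_all _ fun z => ?_)
    have hi := PiLp.norm_apply_le z.2 i
    have hj := PiLp.norm_apply_le z.2 j
    rw [norm_mul, norm_mul, ← one_mul (‖z.2‖ ^ 2), sq]
    gcongr
    exact hφb z.1
  have huu : Integrable (fun z => φ z.1 * (u z.1 i * u z.1 j)) μ := by
    refine (integrable_const (B * B)).mono' (by fun_prop)
      (ae_of_all _ fun z => abs_mul_apply_mul_apply_le hφb huB z.1 i j)
  have hw1 : Integrable (fun z => ‖z.2 - u z.1‖) μ := (hw.integrable one_le_two).norm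
  have hw2 : Integrable (fun z => ‖z.2 - u z.1‖ ^ 2) μ := hw.integrable_norm_pow two_ne_zero
  rw [← integral_sub hvv huu, ← Real.norm_eq_abs]
  calc ‖∫ z, φ z.1 * (z.2 i * z.2 j) - φ z.1 * (u z.1 i * u z.1 j) ∂μ‖
      ≤ ∫ z, ‖z.2 - u z.1‖ ^ 2 + 2 * B * ‖z.2 - u z.1‖ ∂μ := by
        refine norm_integral_le_of_norm_le (hw2.add (hw1.const_mul _)) (ae_of_all _ fun z => ?_)
        rw [← mul_sub, norm_mul, Real.norm_eq_abs, Real.norm_eq_abs, ← one_mul (_ + _)]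
        refine mul_le_mul (hφb z.1) ((abs_apply_mul_apply_sub_le _ _ i j).trans ?_)
          (abs_nonneg _) zero_le_one
        gcongr
        exact huB z.1
    _ = (∫ z, ‖z.2 - u z.1‖ ^ 2 ∂μ) + 2 * B * ∫ z, ‖z.2 - u z.1‖ ∂μ := by
        rw [integral_add hw2 (hw1.const_mul _), integral_const_mul]
    _ ≤ (∫ z, ‖z.2 - u z.1‖ ^ 2 ∂μ) + 2 * B * √(∫ z, ‖z.2 - u z.1‖ ^ 2 ∂μ) := by
        gcongr
        exact integral_le_sqrt_integral_sq hw.norm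

lemma LipschitzWith.mul_apply_mul_apply {α ι : Type*} [PseudoMetricSpace α] [Fintype ι]
    {φ : α → ℝ} (hφb : ∀ x, |φ x| ≤ 1) (hφl : LipschitzWith 1 φ) {u : α → EuclideanSpace ℝ ι}
    {B K : ℝ≥0} (huB : ∀ x, ‖u x‖ ≤ B) (hul : LipschitzWith K u) (i j : ι) :
    LipschitzWith (B * B + 2 * B * K) fun x => φ x * (u x i * u x j) := by
  have hcoord (k : ι) : LipschitzWith K fun x => u x k := by
    simpa [Function.comp_def] using (EuclideanSpace.lipschitzWith_apply k).comp hul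
  have hcoordB (k : ι) (x : α) : |u x k| ≤ B := (PiLp.norm_apply_le (u x) k).trans (huB x)
  have hprod := (hcoord i).mul_of_abs_le (hcoord j) (hcoordB i) (hcoordB j)
  have hprodB (x : α) : |u x i * u x j| ≤ ↑(B * B) := by
    rw [abs_mul, NNReal.coe_mul]
    exact mul_le_mul (hcoordB i x) (hcoordB j x) (abs_nonneg _) B.2
  convert hφl.mul_of_abs_le hprod (Bf := 1) (by simpa using hφb) hprodB using 1
  ring

lemma isProbabilityMeasure_withDensity_ofReal {α : Type*} [MeasurableSpace α] {μ : Measure α}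
    {ρ : α → ℝ} (hρ0 : 0 ≤ᵐ[μ] ρ) (hρi : Integrable ρ μ) (hρ1 : ∫ y, ρ y ∂μ = 1) :
    IsProbabilityMeasure (μ.withDensity fun y => ENNReal.ofReal (ρ y)) := by
  constructor
  rw [withDensity_apply _ MeasurableSet.univ, setLIntegral_univ,
    ← ofReal_integral_eq_lintegral_ofReal hρi hρ0, hρ1, ENNReal.ofReal_one]

lemma integral_withDensity_ofReal {α : Type*} [MeasurableSpace α] {μ : Measure α}
    {ρ : α → ℝ} (hρ0 : 0 ≤ᵐ[μ] ρ) (hρm : AEMeasurable ρ μ) (ψ : α → ℝ) :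
    ∫ y, ψ y ∂μ.withDensity (fun y => ENNReal.ofReal (ρ y)) = ∫ y, ρ y * ψ y ∂μ := by
  rw [integral_withDensity_eq_integral_toReal_smul₀ hρm.ennreal_ofReal
    (ae_of_all _ fun _ => ENNReal.ofReal_lt_top)]
  refine integral_congr_ae (hρ0.mono fun y hy => ?_)
  simp only [ENNReal.toReal_ofReal hy, smul_eq_mul]

/-- convergence of the local energy: for a probability measure `μ^N`
on phase space with spatial marginal `ρ^N`, a probability density `ρ`, and a bounded
Lipschitz velocity field `u`,
`d_BL(∫ (v⊗v) μ^N(·,dv), ρ u⊗u) ≤ ∫∫|v−u(x)|² μ^N + C (∫∫|v−u(x)|² μ^N)^{1/2} + C d_BL(ρ^N, ρ)`,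
with `C` depending only on `‖u‖_{L^∞}` and `‖u‖_{Lip}`. -/
theorem local_energy_convergence
    (d : ℕ) (Cu Lu : ℝ) :
    ∃ C : ℝ, 0 < C ∧
      ∀ (μ : Measure (EuclideanSpace ℝ (Fin d) × EuclideanSpace ℝ (Fin d))),
        IsProbabilityMeasure μ →
        Integrable (fun z : EuclideanSpace ℝ (Fin d) × EuclideanSpace ℝ (Fin d) => ‖z.2‖ ^ 2) μ →
      ∀ (ρ : EuclideanSpace ℝ (Fin d) → ℝ),
        (∀ y, 0 ≤ ρ y) → Integrable ρ → (∫ y, ρ y) = 1 →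
      ∀ (u : EuclideanSpace ℝ (Fin d) → EuclideanSpace ℝ (Fin d)),
        (∀ y, ‖u y‖ ≤ Cu) → LipschitzWith (Real.toNNReal Lu) u →
        dBLmom2 μ ρ u
          ≤ (∫ z, ‖z.2 - u z.1‖ ^ 2 ∂μ)
            + C * Real.sqrt (∫ z, ‖z.2 - u z.1‖ ^ 2 ∂μ)
            + C * dBL (μ.map Prod.fst)
                (volume.withDensity (fun y => ENNReal.ofReal (ρ y))) := by
  set B : ℝ≥0 := Cu.toNNReal
  set M : ℝ≥0 := B * B + 2 * B * Lu.toNNReal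
  refine ⟨2 * B + M + 1, by positivity, ?_⟩
  intro μ _ hv ρ hρ0 hρi hρ1 u huCu hul
  set E := ∫ z, ‖z.2 - u z.1‖ ^ 2 ∂μ
  set ρm := volume.withDensity fun y => ENNReal.ofReal (ρ y)
  have huB (x) : ‖u x‖ ≤ B := (huCu x).trans (Real.le_coe_toNNReal Cu)
  have hρ0' : 0 ≤ᵐ[volume] ρ := ae_of_all _ hρ0
  have : IsProbabilityMeasure ρm := isProbabilityMeasure_withDensity_ofReal hρ0' hρi hρ1
  have hD := dBL_nonneg (μ.map Prod.fst) ρm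
  refine Real.sSup_le ?_ (by positivity)
  rintro r ⟨i, j, φ, hφb, hφl, rfl⟩
  have hmoment := abs_integral_apply_mul_apply_sub_le hv hul.continuous.measurable huB
    hφl.continuous.measurable hφb i j
  have hψb (y) : |φ y * (u y i * u y j)| ≤ M := (abs_mul_apply_mul_apply_le hφb huB y i j).trans
    (by exact_mod_cast (le_self_add : B * B ≤ M))
  have hψl := hφl.mul_apply_mul_apply hφb huB hul i j
  have hspatial := abs_integral_sub_le_mul_dBL (μ.map Prod.fst) ρm hψb hψl
  rw [integral_map measurable_fst.aemeasurable hψl.continuous.aestronglyMeasurable,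
    integral_withDensity_ofReal hρ0' hρi.aemeasurable] at hspatial
  calc |(∫ z, φ z.1 * (z.2 i * z.2 j) ∂μ) - ∫ y, φ y * (ρ y * (u y i * u y j))|
      ≤ |(∫ z, φ z.1 * (z.2 i * z.2 j) ∂μ) - ∫ z, φ z.1 * (u z.1 i * u z.1 j) ∂μ|
        + |(∫ z, φ z.1 * (u z.1 i * u z.1 j) ∂μ) - ∫ y, φ y * (ρ y * (u y i * u y j))| :=
        abs_sub_le _ _ _
    _ ≤ (E + 2 * B * √E) + M * dBL (μ.map Prod.fst) ρm :=
        add_le_add hmoment (by simpa only [mul_left_comm] using hspatial)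
    _ ≤ E + (2 * B + M + 1) * √E + (2 * B + M + 1) * dBL (μ.map Prod.fst) ρm := by
        gcongr <;> linarith [M.2]
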